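/- With X → S the minimal regular proper model of a genus-1 curve over a complete DVR with algebraically closed residue field, and X_s = Σᵢ nᵢ Cᵢ its special fiber, the relative dualizing sheaf ω_{X/S} satisfies ω_{X/S}·Cᵢ = 0 for every irreducible component Cᵢ of the special fiber. -/

import Mathlib

/-! The adjunction formula gives `ω · Cᵢ = 2gᵢ - 2 - Cᵢ²`. Since `Cᵢ · X_s = 0` and `Cᵢ` meets the
other components nonnegatively, `Cᵢ² ≤ 0`; when the fiber has at least two components,
connectedness makes `Cᵢ²` strictly negative, and minimality rules out `Cᵢ² = -1` for `gᵢ = 0`.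
Hence `ω · Cᵢ ≥ 0` for every `i`, and `ω · X_s = Σ nᵢ (ω · Cᵢ) = 0` forces every term to vanish.
With a single component, `ω · X_s = n₁ (ω · C₁)` directly. -/

open Finset

section SumMulEqZero

variable {ι R : Type*} [Fintype ι] [CommRing R] [LinearOrder R] [IsStrictOrderedRing R]
  {n v : ι → R} {k : ι}

lemma nonpos_of_sum_mul_eq_zero (hn : ∀ j, 0 < n j) (hv : ∀ j, j ≠ k → 0 ≤ v j)
    (hsum : ∑ j, n j * v j = 0) : v k ≤ 0 := by
  classical
  have hrest : 0 ≤ ∑ j ∈ univ.erase k, n j * v j :=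
    sum_nonneg fun j hj => mul_nonneg (hn j).le (hv j (ne_of_mem_erase hj))
  rw [← add_sum_erase _ _ (mem_univ k)] at hsum
  exact nonpos_of_mul_nonpos_right (by linarith) (hn k)

lemma neg_of_sum_mul_eq_zero (hn : ∀ j, 0 < n j) (hv : ∀ j, j ≠ k → 0 ≤ v j)
    (hsum : ∑ j, n j * v j = 0) {j : ι} (hjk : j ≠ k) (hvj : 0 < v j) : v k < 0 := by
  classical
  have hrest : 0 < ∑ j ∈ univ.erase k, n j * v j :=
    sum_pos' (fun j hj => mul_nonneg (hn j).le (hv j (ne_of_mem_erase hj)))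
      ⟨j, mem_erase.mpr ⟨hjk, mem_univ j⟩, mul_pos (hn j) hvj⟩
  rw [← add_sum_erase _ _ (mem_univ k)] at hsum
  exact neg_of_mul_neg_right (by linarith) (hn k).le

end SumMulEqZero

lemma AddMonoidHom.map_sum_zsmul {ι M : Type*} [Fintype ι] [AddCommGroup M] (f : M →+ ℤ)
    (c : ι → ℤ) (x : ι → M) : f (∑ j, c j • x j) = ∑ j, c j * f (x j) := by
  simp [map_sum, map_zsmul]

lemma inter_nonneg_of_adjunction {M : Type*} [AddCommGroup M] {inter : M →+ M →+ ℤ}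
    {ω c : M} {g : ℕ} (hadj : 2 * (g : ℤ) - 2 = inter (ω + c) c) (hself : inter c c < 0)
    (hmin : ¬(g = 0 ∧ inter c c = -1)) : 0 ≤ inter ω c := by
  rw [map_add, AddMonoidHom.add_apply] at hadj
  omega

theorem stmt_6_general
    (DivCl : Type) [AddCommGroup DivCl]
    (inter : DivCl →+ DivCl →+ ℤ)
    (ι : Type) [Fintype ι]
    (C : ι → DivCl) (n : ι → ℕ) (hn : ∀ i, 0 < n i)
    (ω : DivCl) (g : ι → ℕ)
    -- distinct components of the special fiber meet nonnegatively
    (hmeet : ∀ i j, i ≠ j → 0 ≤ inter (C i) (C j))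
    -- the special fiber is connected
    (hconn : 2 ≤ Fintype.card ι → ∀ i, ∃ j, j ≠ i ∧ 0 < inter (C i) (C j))
    -- each component has intersection number zero with the full special fiber
    (hfib : ∀ i, inter (C i) (∑ j, (n j : ℤ) • C j) = 0)
    -- `ω_{X/S}` is trivial on the generic fiber, hence `ω_{X/S} · X_s = 0`
    (hωfib : inter ω (∑ j, (n j : ℤ) • C j) = 0)
    -- adjunction formula on the regular surface `X`
    (hadj : ∀ i, 2 * (g i : ℤ) - 2 = inter (ω + C i) (C i))
    -- minimality: no `(-1)`-curve of genus `0` in the special fiber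
    (hmin : ∀ i, ¬(g i = 0 ∧ inter (C i) (C i) = -1)) :
    ∀ i, inter ω (C i) = 0 := by
  intro i
  have hnpos : ∀ j, (0 : ℤ) < n j := fun j => by exact_mod_cast hn j
  have hωsum : ∑ j, (n j : ℤ) * inter ω (C j) = 0 := by
    rwa [← AddMonoidHom.map_sum_zsmul]
  rcases lt_or_ge (Fintype.card ι) 2 with hcard | hcard
  · have : Subsingleton ι := Fintype.card_le_one_iff_subsingleton.mp (by omega)
    rw [Fintype.sum_subsingleton _ i] at hωsum
    exact (mul_eq_zero.mp hωsum).resolve_left (hnpos i).ne'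
  · have hself : ∀ k, inter (C k) (C k) < 0 := fun k => by
      obtain ⟨j, hjk, hpos⟩ := hconn hcard k
      refine neg_of_sum_mul_eq_zero (k := k) hnpos (fun j hj => hmeet k j hj.symm) ?_ hjk hpos
      rw [← AddMonoidHom.map_sum_zsmul, hfib k]
    have hnonneg : ∀ k, 0 ≤ inter ω (C k) := fun k =>
      inter_nonneg_of_adjunction (hadj k) (hself k) (hmin k)
    exact le_antisymm (nonpos_of_sum_mul_eq_zero (k := i) hnpos (fun j _ => hnonneg j) hωsum) (hnonneg i)

/-- Intersection theory on the minimal regular proper model `X → S` of a genus-1 curve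
over a complete discrete valuation ring with algebraically closed residue field, with
special fiber `X_s = Σᵢ nᵢ Cᵢ`: the relative dualizing sheaf `ω_{X/S}` satisfies
`ω_{X/S} · Cᵢ = 0` for every irreducible component `Cᵢ` of the special fiber.

The data is presented via the group `DivCl` of divisor (line bundle) classes on the
regular surface `X` together with the intersection pairing:
`C i` are the classes of the (`r ≥ 1`) irreducible components of `X_s`, `n i > 0` their
multiplicities, `ω` the class of `ω_{X/S}`, and `g i` the genus of `Cᵢ`.  The hypotheses
are: the pairing is symmetric; distinct components meet nonnegatively; the special fiber
is connected; each `Cᵢ` and `ω` (trivial on the generic fiber) meet the full fiber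
`Σ nⱼ Cⱼ` with intersection number `0`; adjunction `2g(Cᵢ) - 2 = (ω + Cᵢ)·Cᵢ`; and
minimality: no component is a `(-1)`-curve of genus `0`. -/
theorem stmt_6
    (DivCl : Type) [AddCommGroup DivCl]
    (inter : DivCl →+ DivCl →+ ℤ)
    (hsym : ∀ a b, inter a b = inter b a)
    (ι : Type) [Fintype ι] [Nonempty ι]
    (C : ι → DivCl) (n : ι → ℕ) (hn : ∀ i, 0 < n i)
    (ω : DivCl) (g : ι → ℕ)
    -- distinct components of the special fiber meet nonnegatively
    (hmeet : ∀ i j, i ≠ j → 0 ≤ inter (C i) (C j))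
    -- the special fiber is connected
    (hconn : 2 ≤ Fintype.card ι → ∀ i, ∃ j, j ≠ i ∧ 0 < inter (C i) (C j))
    -- each component has intersection number zero with the full special fiber
    (hfib : ∀ i, inter (C i) (∑ j, (n j : ℤ) • C j) = 0)
    -- `ω_{X/S}` is trivial on the generic fiber, hence `ω_{X/S} · X_s = 0`
    (hωfib : inter ω (∑ j, (n j : ℤ) • C j) = 0)
    -- adjunction formula on the regular surface `X`
    (hadj : ∀ i, 2 * (g i : ℤ) - 2 = inter (ω + C i) (C i))
    -- minimality: no `(-1)`-curve of genus `0` in the special fiber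
    (hmin : ∀ i, ¬(g i = 0 ∧ inter (C i) (C i) = -1)) :
    ∀ i, inter ω (C i) = 0 :=
  stmt_6_general DivCl inter ι C n hn ω g hmeet hconn hfib hωfib hadj hmin
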